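/- Entropy decrease along backward evolution from a maliciously prepared initial state: Let 𝒫 be a Boltzmann partition of Ω closed under a time reversal T (T maps cells to cells), let U and U* be measure-preserving bijections satisfying U*(T(U(x))) = T(x) for all x, and let A ∈ 𝒫. Define the time-reversed evolved density g = (ρ_A ∘ U⁻¹) ∘ T. Then (i) the backward evolution carries g to the Boltzmann state of T(A): g ∘ (U*)⁻¹ = ρ_{T(A)}; and (ii) assuming Σ_{B∈𝒫} |Pr(B|A) log(Pr(B|A)/μ(B))| < ∞ with Pr(B|A) = μ(U(A) ∩ B)/μ(A), the coarse-grained Gibbs entropy of the initial state dominates that of the final state: S_G[Cg] ≥ log μ(A) = log μ(T(A)) = S_G[ρ_{T(A)}]. -/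

import Mathlib

/-!
The time-reversed evolved state `g = ρ_A ∘ U⁻¹ ∘ T` is itself the Boltzmann state of
`T⁻¹(U(A))`, a set of the same measure as `A`, so `0 ≤ g ≤ 1/μ(A)` and `∫ g = 1`. Its
coarse-graining has the cell weights `p_B = ∫_B g ≤ μ(B)/μ(A)`, whence
`S_G[Cg] = -Σ p_B log (p_B/μ(B)) ≥ -Σ p_B log (1/μ(A)) = log μ(A)`. Since `T` permutes the
cells, `p_B` is the transition probability `Pr(T(B)|A)`, which is how the summability
hypothesis enters. Part (i) is the identity `U⁻¹ ∘ T ∘ U*⁻¹ = T`.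
-/

open MeasureTheory Set

/-- The coarse-graining of a function `f` with respect to the partition `P`:
`(Cf)(x) = Σ_{B∈𝒫} (∫_B f dμ / μ(B)) χ_B(x)`. -/
noncomputable def coarseGrain {Ω : Type*} [MeasurableSpace Ω]
    (μ : Measure Ω) (P : ℕ → Set Ω) (f : Ω → ℝ) : Ω → ℝ :=
  fun x => ∑' n, Set.indicator (P n)
    (fun _ => (∫ y in P n, f y ∂μ) / (μ (P n)).toReal) x

/-- The Boltzmann state of a cell `A`: the probability density `ρ_A = χ_A / μ(A)`. -/
noncomputable def boltzmannState {Ω : Type*} [MeasurableSpace Ω]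
    (μ : Measure Ω) (A : Set Ω) : Ω → ℝ :=
  Set.indicator A (fun _ => ((μ A).toReal)⁻¹)

/-- The Gibbs entropy `S_G[ρ] = −∫ ρ log ρ dμ` (with `0 · log 0 = 0`). -/
noncomputable def gibbsEntropy {Ω : Type*} [MeasurableSpace Ω]
    (μ : Measure Ω) (ρ : Ω → ℝ) : ℝ :=
  - ∫ x, ρ x * Real.log (ρ x) ∂μ

open Function

theorem mul_div_mul_log_div (m p : ℝ) :
    m * (p / m * Real.log (p / m)) = p * Real.log (p / m) := by
  rcases eq_or_ne m 0 with rfl | hm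
  · simp
  · rw [← mul_assoc, mul_div_cancel₀ _ hm]

theorem tsum_mul_log_div_le_log {ι : Type*} {q m : ι → ℝ} {c : ℝ} (hq0 : ∀ i, 0 ≤ q i)
    (hm0 : ∀ i, 0 ≤ m i) (hqm : ∀ i, q i ≤ c * m i) (hq : HasSum q 1)
    (hsum : Summable fun i => q i * Real.log (q i / m i)) :
    ∑' i, q i * Real.log (q i / m i) ≤ Real.log c := by
  have hterm : ∀ i, q i * Real.log (q i / m i) ≤ q i * Real.log c := by
    intro i
    rcases (hq0 i).eq_or_lt with hqi | hqi
    · simp [← hqi]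
    have hmi : 0 < m i := (hm0 i).lt_of_ne fun h => by
      have := hqm i
      rw [← h, mul_zero] at this
      linarith
    have hqmc : q i / m i ≤ c := (div_le_iff₀ hmi).2 (hqm i)
    exact mul_le_mul_of_nonneg_left (Real.log_le_log (div_pos hqi hmi) hqmc) hqi.le
  calc ∑' i, q i * Real.log (q i / m i) ≤ ∑' i, q i * Real.log c :=
        hsum.tsum_le_tsum hterm (hq.summable.mul_right _)
    _ = Real.log c := by rw [tsum_mul_right, hq.tsum_eq, one_mul]

section Partition

variable {Ω ι : Type*} {P : ι → Set Ω}

theorem tsum_indicator_const_of_mem {M : Type*} [AddCommMonoid M] [TopologicalSpace M]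
    (hPdisj : Pairwise (Disjoint on P)) (c : ι → M) {x : Ω} {k : ι} (hx : x ∈ P k) :
    ∑' n, (P n).indicator (fun _ => c n) x = c k := by
  rw [tsum_eq_single k, indicator_of_mem hx]
  intro n hn
  exact indicator_of_notMem (fun hxn => disjoint_left.mp (hPdisj hn) hxn hx) _

theorem comp_tsum_indicator_const {M N : Type*} [AddCommMonoid M] [TopologicalSpace M]
    [AddCommMonoid N] [TopologicalSpace N] (hPdisj : Pairwise (Disjoint on P))
    (hPcover : ⋃ n, P n = univ) (F : M → N) (c : ι → M) (x : Ω) :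
    F (∑' n, (P n).indicator (fun _ => c n) x) = ∑' n, (P n).indicator (fun _ => F (c n)) x := by
  obtain ⟨k, hk⟩ := mem_iUnion.mp (hPcover ▸ mem_univ x)
  rw [tsum_indicator_const_of_mem hPdisj c hk, tsum_indicator_const_of_mem hPdisj _ hk]

theorem integral_tsum_indicator_const [MeasurableSpace Ω] {μ : Measure Ω} [Countable ι]
    (hPmeas : ∀ n, MeasurableSet (P n)) (hPfin : ∀ n, μ (P n) < ⊤) (b : ι → ℝ)
    (hb : Summable fun n => μ.real (P n) * |b n|) :
    ∫ x, ∑' n, (P n).indicator (fun _ => b n) x ∂μ = ∑' n, μ.real (P n) * b n := by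
  have hnorm : ∀ n, ∫ x, ‖(P n).indicator (fun _ => b n) x‖ ∂μ = μ.real (P n) * |b n| := by
    intro n
    simp_rw [norm_indicator_eq_indicator_norm]
    rw [integral_indicator_const _ (hPmeas n), smul_eq_mul, Real.norm_eq_abs]
  rw [← integral_tsum_of_summable_integral_norm
    (fun n => (integrable_indicator_iff (hPmeas n)).2 (integrableOn_const (hPfin n).ne))
    (by simpa only [hnorm] using hb)]
  simp only [integral_indicator_const _ (hPmeas _), smul_eq_mul]

theorem exists_perm_preimage_eq (hPdisj : Pairwise (Disjoint on P))
    (hPne : ∀ n, (P n).Nonempty) {T : Ω → Ω} (hT : Involutive T)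
    (hTcell : ∀ n, ∃ m, T '' P n = P m) : ∃ σ : Equiv.Perm ι, ∀ n, T ⁻¹' P n = P (σ n) := by
  simp only [hT.image_eq_preimage_symm] at hTcell
  choose σ hσ using hTcell
  have hPinj : Injective P := pairwise_ne_iff_injective.mp fun i j hij heq => by
    have hdisj : Disjoint (P i) (P j) := hPdisj hij
    rw [heq, disjoint_self] at hdisj
    exact (hPne j).ne_empty hdisj
  have hσσ : Involutive σ := fun n => hPinj (by rw [← hσ, ← hσ, hT.preimage])
  exact ⟨hσσ.toPerm σ, hσ⟩

end Partition

section Entropy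

variable {Ω : Type*} [MeasurableSpace Ω] {μ : Measure Ω}

theorem gibbsEntropy_coarseGrain {P : ℕ → Set Ω} (hPmeas : ∀ n, MeasurableSet (P n))
    (hPdisj : Pairwise (Disjoint on P)) (hPcover : ⋃ n, P n = univ) (hPfin : ∀ n, μ (P n) < ⊤)
    (f : Ω → ℝ)
    (hsum : Summable fun n => |(∫ x in P n, f x ∂μ)
      * Real.log ((∫ x in P n, f x ∂μ) / μ.real (P n))|) :
    gibbsEntropy μ (coarseGrain μ P f) = -∑' n, (∫ x in P n, f x ∂μ)
      * Real.log ((∫ x in P n, f x ∂μ) / μ.real (P n)) := by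
  set p := fun n => ∫ x in P n, f x ∂μ
  have hcell : ∀ n, μ.real (P n) * (p n / μ.real (P n) * Real.log (p n / μ.real (P n)))
      = p n * Real.log (p n / μ.real (P n)) := fun n => mul_div_mul_log_div _ _
  have hpt : (fun x => coarseGrain μ P f x * Real.log (coarseGrain μ P f x)) = fun x =>
      ∑' n, (P n).indicator (fun _ => p n / μ.real (P n) * Real.log (p n / μ.real (P n))) x :=
    funext (comp_tsum_indicator_const hPdisj hPcover (fun t => t * Real.log t) _)
  have hsum' : Summable fun n =>
      μ.real (P n) * |p n / μ.real (P n) * Real.log (p n / μ.real (P n))| := by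
    refine hsum.congr fun n => ?_
    rw [← hcell n, abs_mul, abs_of_nonneg measureReal_nonneg]
  rw [gibbsEntropy, hpt, integral_tsum_indicator_const hPmeas hPfin _ hsum']
  simp only [hcell, p]

theorem neg_log_le_gibbsEntropy_coarseGrain {P : ℕ → Set Ω} (hPmeas : ∀ n, MeasurableSet (P n))
    (hPdisj : Pairwise (Disjoint on P)) (hPcover : ⋃ n, P n = univ) (hPfin : ∀ n, μ (P n) < ⊤)
    {f : Ω → ℝ} {c : ℝ} (hf0 : ∀ x, 0 ≤ f x) (hfc : ∀ x, f x ≤ c) (hf : Integrable f μ)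
    (hf1 : ∫ x, f x ∂μ = 1)
    (hsum : Summable fun n => |(∫ x in P n, f x ∂μ)
      * Real.log ((∫ x in P n, f x ∂μ) / μ.real (P n))|) :
    -Real.log c ≤ gibbsEntropy μ (coarseGrain μ P f) := by
  rw [gibbsEntropy_coarseGrain hPmeas hPdisj hPcover hPfin f hsum, neg_le_neg_iff]
  refine tsum_mul_log_div_le_log (fun n => setIntegral_nonneg (hPmeas n) fun x _ => hf0 x)
    (fun _ => measureReal_nonneg) (fun n => ?_) ?_ hsum.of_abs
  · calc ∫ x in P n, f x ∂μ ≤ ‖∫ x in P n, f x ∂μ‖ := Real.le_norm_self _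
      _ ≤ c * μ.real (P n) := norm_setIntegral_le_of_norm_le_const (hPfin n) fun x _ => by
          rw [Real.norm_of_nonneg (hf0 x)]
          exact hfc x
  · simpa only [hPcover, setIntegral_univ, hf1] using
      hasSum_integral_iUnion hPmeas hPdisj hf.integrableOn

theorem boltzmannState_nonneg (μ : Measure Ω) (A : Set Ω) (x : Ω) :
    0 ≤ boltzmannState μ A x :=
  indicator_nonneg (fun _ _ => inv_nonneg.2 measureReal_nonneg) x

theorem boltzmannState_le (μ : Measure Ω) (A : Set Ω) (x : Ω) :
    boltzmannState μ A x ≤ (μ.real A)⁻¹ :=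
  indicator_le_self' (fun _ _ => inv_nonneg.2 measureReal_nonneg) x

theorem integrable_boltzmannState {A : Set Ω} (hA : MeasurableSet A) (hAfin : μ A ≠ ⊤) :
    Integrable (boltzmannState μ A) μ :=
  (integrable_indicator_iff hA).2 (integrableOn_const hAfin)

theorem setIntegral_boltzmannState {A : Set Ω} (hA : MeasurableSet A) (S : Set Ω) :
    ∫ x in S, boltzmannState μ A x ∂μ = μ.real (S ∩ A) / μ.real A := by
  rw [boltzmannState, setIntegral_indicator hA, setIntegral_const, smul_eq_mul, div_eq_mul_inv]
  rfl

theorem integral_boltzmannState {A : Set Ω} (hA : MeasurableSet A) (hA0 : μ A ≠ 0)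
    (hAfin : μ A ≠ ⊤) : ∫ x, boltzmannState μ A x ∂μ = 1 := by
  rw [← setIntegral_univ, setIntegral_boltzmannState hA, univ_inter,
    div_self ((measureReal_ne_zero_iff hAfin).2 hA0)]

theorem gibbsEntropy_boltzmannState {A : Set Ω} (hA : MeasurableSet A) :
    gibbsEntropy μ (boltzmannState μ A) = Real.log (μ.real A) := by
  have hpt : (fun x => boltzmannState μ A x * Real.log (boltzmannState μ A x))
      = A.indicator fun _ => (μ.real A)⁻¹ * Real.log (μ.real A)⁻¹ := by
    ext x
    by_cases hx : x ∈ A <;> simp [boltzmannState, hx, Measure.real]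
  rw [gibbsEntropy, hpt, integral_indicator_const _ hA, smul_eq_mul, Real.log_inv]
  rcases eq_or_ne (μ.real A) 0 with h0 | h0
  · simp [h0]
  · field_simp

theorem log_measureReal_le_gibbsEntropy_coarseGrain {P : ℕ → Set Ω}
    (hPmeas : ∀ n, MeasurableSet (P n)) (hPdisj : Pairwise (Disjoint on P))
    (hPcover : ⋃ n, P n = univ) (hPfin : ∀ n, μ (P n) < ⊤) {A : Set Ω} (hA : MeasurableSet A)
    (hA0 : μ A ≠ 0) (hAfin : μ A ≠ ⊤)
    (hsum : Summable fun n => |(∫ x in P n, boltzmannState μ A x ∂μ)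
      * Real.log ((∫ x in P n, boltzmannState μ A x ∂μ) / μ.real (P n))|) :
    Real.log (μ.real A) ≤ gibbsEntropy μ (coarseGrain μ P (boltzmannState μ A)) := by
  simpa only [Real.log_inv, neg_neg] using neg_log_le_gibbsEntropy_coarseGrain hPmeas hPdisj
    hPcover hPfin (boltzmannState_nonneg μ A) (boltzmannState_le μ A)
    (integrable_boltzmannState hA hAfin) (integral_boltzmannState hA hA0 hAfin) hsum

theorem boltzmannState_comp {φ : Ω → Ω} (hφ : MeasurePreserving φ μ μ) {A : Set Ω}
    (hA : MeasurableSet A) :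
    (fun x => boltzmannState μ A (φ x)) = boltzmannState μ (φ ⁻¹' A) := by
  ext x
  rw [boltzmannState, boltzmannState, hφ.measure_preimage hA.nullMeasurableSet]
  exact (indicator_comp_right φ).symm

theorem MeasureTheory.MeasurePreserving.measure_inter_preimage_of_involutive {T : Ω → Ω}
    (hT : MeasurePreserving T μ μ) (hTinv : Involutive T) {s t : Set Ω} (hs : MeasurableSet s)
    (ht : MeasurableSet t) : μ (s ∩ T ⁻¹' t) = μ (T ⁻¹' s ∩ t) := by
  conv_lhs => rw [← hTinv.preimage s]
  rw [← preimage_inter, hT.measure_preimage ((hT.measurable hs).inter ht).nullMeasurableSet]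

theorem setIntegral_boltzmannState_preimage {T : Ω → Ω} (hT : MeasurePreserving T μ μ)
    (hTinv : Involutive T) {s V : Set Ω} (hs : MeasurableSet s) (hV : MeasurableSet V) :
    ∫ x in s, boltzmannState μ (T ⁻¹' V) x ∂μ = μ.real (V ∩ T ⁻¹' s) / μ.real V := by
  rw [setIntegral_boltzmannState (hT.measurable hV), measureReal_def,
    hT.measure_inter_preimage_of_involutive hTinv hs hV, inter_comm,
    hT.measureReal_preimage hV.nullMeasurableSet]
  rfl

end Entropy

theorem entropy_decrease_backward_evolution_general {Ω : Type*} [MeasurableSpace Ω]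
    (μ : Measure Ω)
    (P : ℕ → Set Ω) (hPmeas : ∀ n, MeasurableSet (P n))
    (hPdisj : Pairwise (Function.onFun Disjoint P)) (hPcover : (⋃ n, P n) = Set.univ)
    (hPpos : ∀ n, 0 < μ (P n)) (hPfin : ∀ n, μ (P n) < ⊤)
    (T : Ω → Ω) (hT : MeasurePreserving T μ μ)
    (hTT : T ∘ T = id)
    (hTcell : ∀ n, ∃ m, T '' P n = P m)
    (U Ustar : Ω ≃ᵐ Ω) (hU : MeasurePreserving U μ μ)
    (hrev : ∀ x, Ustar (T (U x)) = T x)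
    (a : ℕ)
    (g : Ω → ℝ) (hg : g = fun x => boltzmannState μ (P a) (U.symm (T x)))
    (hsum : Summable (fun n =>
      |((μ (U '' P a ∩ P n)).toReal / (μ (P a)).toReal)
        * Real.log (((μ (U '' P a ∩ P n)).toReal / (μ (P a)).toReal)
            / (μ (P n)).toReal)|)) :
    ((fun x => g (Ustar.symm x)) = boltzmannState μ (T '' P a))
      ∧ Real.log (μ (P a)).toReal ≤ gibbsEntropy μ (coarseGrain μ P g)
      ∧ Real.log (μ (P a)).toReal = Real.log (μ (T '' P a)).toReal
      ∧ Real.log (μ (T '' P a)).toReal = gibbsEntropy μ (boltzmannState μ (T '' P a)) := by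
  have hTinv : Involutive T := congrFun hTT
  have hTA : T '' P a = T ⁻¹' P a := by rw [hTinv.image_eq_preimage_symm]
  have hμTA : μ (T '' P a) = μ (P a) := hTA ▸ hT.measure_preimage (hPmeas a).nullMeasurableSet
  have hback : ∀ x, U.symm (T (Ustar.symm x)) = T x := fun x => by
    have hx : Ustar.symm x = T (U (T x)) := by rw [Ustar.symm_apply_eq, hrev, hTinv]
    rw [hx, hTinv, U.symm_apply_apply]
  set V := U '' P a
  have hVmeas : MeasurableSet V := U.measurableSet_image.2 (hPmeas a)
  have hVpre : V = U.symm ⁻¹' P a := U.image_eq_preimage_symm _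
  have hμV : μ V = μ (P a) := hVpre ▸ hU.symm.measure_preimage (hPmeas a).nullMeasurableSet
  have hμB : μ (T ⁻¹' V) = μ (P a) := (hT.measure_preimage hVmeas.nullMeasurableSet).trans hμV
  have hgV : g = boltzmannState μ (T ⁻¹' V) := by
    rw [hg, hVpre]
    exact boltzmannState_comp (hU.symm.comp hT) (hPmeas a)
  obtain ⟨σ, hσ⟩ := exists_perm_preimage_eq hPdisj
    (fun n => nonempty_of_measure_ne_zero (hPpos n).ne') hTinv hTcell
  have hweight : ∀ n, ∫ x in P n, g x ∂μ = μ.real (V ∩ P (σ n)) / μ.real (P a) := fun n => by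
    rw [hgV, setIntegral_boltzmannState_preimage hT hTinv (hPmeas n) hVmeas, hσ,
      measureReal_def μ V, hμV]
    rfl
  have hsize : ∀ n, μ.real (P (σ n)) = μ.real (P n) := fun n => by
    rw [← hσ, hT.measureReal_preimage (hPmeas n).nullMeasurableSet]
  refine ⟨?_, ?_, by rw [hμTA], ?_⟩
  · rw [hg, hTA, ← boltzmannState_comp hT (hPmeas a)]
    exact funext fun x => congrArg _ (hback x)
  · have hbound := log_measureReal_le_gibbsEntropy_coarseGrain hPmeas hPdisj hPcover hPfin
      (hT.measurable hVmeas) (hμB ▸ (hPpos a).ne') (hμB ▸ (hPfin a).ne) (by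
        rw [← hgV]
        exact (σ.summable_iff.2 hsum).congr fun n => by rw [comp_apply, hweight, ← hsize n]; rfl)
    rwa [← hgV, measureReal_def, hμB] at hbound
  · exact (gibbsEntropy_boltzmannState (hTA ▸ hT.measurable (hPmeas a))).symm

/-- Entropy decrease along backward evolution from a maliciously prepared initial state:
with `g = (ρ_A ∘ U⁻¹) ∘ T` the time-reversed evolved density of a cell `A = P a`,
(i) the backward evolution carries `g` to the Boltzmann state of `T(A)`, i.e.
`g ∘ (U*)⁻¹ = ρ_{T(A)}`; and (ii) the coarse-grained Gibbs entropy of the initial state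
dominates that of the final state:
`S_G[Cg] ≥ log μ(A) = log μ(T(A)) = S_G[ρ_{T(A)}]`. -/
theorem entropy_decrease_backward_evolution {Ω : Type*} [MeasurableSpace Ω]
    (μ : Measure Ω) [SigmaFinite μ]
    (P : ℕ → Set Ω) (hPmeas : ∀ n, MeasurableSet (P n))
    (hPdisj : Pairwise (Function.onFun Disjoint P)) (hPcover : (⋃ n, P n) = Set.univ)
    (hPpos : ∀ n, 0 < μ (P n)) (hPfin : ∀ n, μ (P n) < ⊤)
    (T : Ω → Ω) (hTmeas : Measurable T) (hT : MeasurePreserving T μ μ)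
    (hTT : T ∘ T = id)
    (hTcell : ∀ n, ∃ m, T '' P n = P m)
    (U Ustar : Ω ≃ᵐ Ω) (hU : MeasurePreserving U μ μ)
    (hUstar : MeasurePreserving Ustar μ μ)
    (hrev : ∀ x, Ustar (T (U x)) = T x)
    (a : ℕ)
    (g : Ω → ℝ) (hg : g = fun x => boltzmannState μ (P a) (U.symm (T x)))
    (hsum : Summable (fun n =>
      |((μ (U '' P a ∩ P n)).toReal / (μ (P a)).toReal)
        * Real.log (((μ (U '' P a ∩ P n)).toReal / (μ (P a)).toReal)
            / (μ (P n)).toReal)|)) :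
    ((fun x => g (Ustar.symm x)) = boltzmannState μ (T '' P a))
      ∧ Real.log (μ (P a)).toReal ≤ gibbsEntropy μ (coarseGrain μ P g)
      ∧ Real.log (μ (P a)).toReal = Real.log (μ (T '' P a)).toReal
      ∧ Real.log (μ (T '' P a)).toReal = gibbsEntropy μ (boltzmannState μ (T '' P a)) :=
  entropy_decrease_backward_evolution_general μ P hPmeas hPdisj hPcover hPpos hPfin T hT hTT hTcell
    U Ustar hU hrev a g hg hsum
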